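/- The single-mode KMB scalar curvature Scal(ν) = -[(2ν - f(ν) + 4ν² f(ν))(f(ν) + 2ν(-1 + 6ν f(ν)))] / [8ν²(4ν² - 1) f(ν)²], with f(ν) = arccoth(2ν), tends to -2 as ν → ∞. -/

import Mathlib

/-!
With `u = 2ν arccoth (2ν)` and `δ = 1 / (4ν²)`, `Scal1 ν` is a fixed rational function of `(u, δ)`,
continuous at `(1, 0)` with value `-2` there. Since `δ → 0` and `u → 1`, the latter because
`arccoth x = log (1 + 2 / (x - 1)) / 2` and `t log (1 + 2 / t) → 2`, the limit follows.
-/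

noncomputable def arccoth (x : ℝ) : ℝ := (1/2) * Real.log ((x + 1) / (x - 1))

noncomputable def Scal1 (ν : ℝ) : ℝ :=
  -((2*ν - arccoth (2*ν) + 4*ν^2 * arccoth (2*ν))
      * (arccoth (2*ν) + 2*ν*(-1 + 6*ν*arccoth (2*ν))))
    / (8*ν^2*(4*ν^2 - 1) * (arccoth (2*ν))^2)

open Filter Real Topology

lemma arccoth_eq_half_log_one_add {x : ℝ} (hx : x ≠ 1) :
    arccoth x = log (1 + 2 / (x - 1)) / 2 := by
  have hx' : x - 1 ≠ 0 := sub_ne_zero.mpr hx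
  rw [arccoth, one_add_div hx']
  ring_nf

lemma arccoth_pos {x : ℝ} (hx : 1 < x) : 0 < arccoth x := by
  rw [arccoth_eq_half_log_one_add hx.ne']
  have : 0 < 2 / (x - 1) := div_pos two_pos (sub_pos.mpr hx)
  exact half_pos (log_pos (by linarith))

lemma tendsto_mul_arccoth_atTop : Tendsto (fun x => x * arccoth x) atTop (𝓝 1) := by
  have hshift : Tendsto (fun x : ℝ => x - 1) atTop atTop :=
    tendsto_atTop_add_const_right _ _ tendsto_id
  have hmul : Tendsto (fun x : ℝ => (x - 1) * log (1 + 2 / (x - 1))) atTop (𝓝 2) :=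
    (tendsto_mul_log_one_add_div_atTop 2).comp hshift
  have hlog : Tendsto (fun x : ℝ => log (1 + 2 / (x - 1))) atTop (𝓝 0) := by
    have h1 : Tendsto (fun x : ℝ => 1 + 2 / (x - 1)) atTop (𝓝 1) := by
      simpa using tendsto_const_nhds.add (hshift.const_div_atTop 2)
    simpa using h1.log one_ne_zero
  have key := (hmul.add hlog).div_const 2
  norm_num at key
  refine key.congr' ?_
  filter_upwards [eventually_gt_atTop 1] with x hx
  rw [arccoth_eq_half_log_one_add hx.ne']
  ring

/-- `Scal1 ν` in the variables `u = 2ν arccoth (2ν) → 1` and `δ = 1 / (4ν²) → 0`. -/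
noncomputable def scal1Reduced (u δ : ℝ) : ℝ :=
  -((1 + u - u * δ) * (3 * u - 1 + u * δ)) / (2 * (1 - δ) * u ^ 2)

lemma scal1_eq_scal1Reduced {ν : ℝ} (hν : 1 / 2 < ν) :
    Scal1 ν = scal1Reduced (2 * ν * arccoth (2 * ν)) (1 / (4 * ν ^ 2)) := by
  have hν0 : ν ≠ 0 := by positivity
  have hf : arccoth (2 * ν) ≠ 0 := (arccoth_pos (by linarith)).ne'
  have h41 : 4 * ν ^ 2 - 1 ≠ 0 := by nlinarith
  rw [Scal1, scal1Reduced]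
  field_simp
  ring

lemma continuousAt_scal1Reduced :
    ContinuousAt (fun p : ℝ × ℝ => scal1Reduced p.1 p.2) (1, 0) := by
  unfold scal1Reduced
  fun_prop (disch := norm_num)

/-- The single-mode scalar curvature tends to `-2` as `ν → ∞`. -/
theorem scal1_tendsto_atTop : Filter.Tendsto Scal1 Filter.atTop (nhds (-2)) := by
  have hu := tendsto_mul_arccoth_atTop.comp (tendsto_id.const_mul_atTop two_pos)
  have hδ : Tendsto (fun ν : ℝ => 1 / (4 * ν ^ 2)) atTop (𝓝 0) :=
    ((tendsto_pow_atTop two_ne_zero).const_mul_atTop four_pos).const_div_atTop 1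
  have h := continuousAt_scal1Reduced.tendsto.comp (hu.prodMk_nhds hδ)
  have hval : scal1Reduced 1 0 = -2 := by norm_num [scal1Reduced]
  rw [hval] at h
  refine h.congr' ?_
  filter_upwards [eventually_gt_atTop (1 / 2)] with ν hν
  exact (scal1_eq_scal1Reduced hν).symm
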